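/- arXiv:2312.03919 — 2 statements merged into one kernel-verified Lean document; each statement's English description precedes it below -/
import Mathlib

section
/- For every k ≥ 1, every coloring c : ℚ → Fin k, and all rationals a < b, there exist rationals a', b' with a ≤ a' < b' ≤ b and a color i : Fin k such that the set {q ∈ (a',b') : c q = i} is dense in the interval (a',b'). -/
/-!
If no color were dense in any subinterval, we could shrink `(a, b)` one color at a time: a color
that is not dense in the current interval misses a whole subinterval of it. After all finitely
many colors have been handled we are left with a nonempty open interval that carries no color
at all, which is absurd.
-/

open Set

def DenseBetween {α : Type*} [Preorder α] (S : Set α) (a b : α) : Prop :=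
  ∀ x y, a ≤ x → x < y → y ≤ b → ∃ q ∈ Ioo x y, q ∈ S

section

variable {α ι : Type*} [Preorder α] {c : α → ι} {a b : α}

theorem exists_Ioo_forall_color_notMem_of_not_denseBetween (hab : a < b)
    (h : ∀ a' b' i, a ≤ a' → a' < b' → b' ≤ b → ¬DenseBetween (c ⁻¹' {i}) a' b')
    (s : Finset ι) : ∃ x y, a ≤ x ∧ x < y ∧ y ≤ b ∧ ∀ q ∈ Ioo x y, c q ∉ s := by
  classical
  induction s using Finset.induction_on with
  | empty => exact ⟨a, b, le_rfl, hab, le_rfl, fun _ _ => Finset.notMem_empty _⟩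
  | insert i s _ ih =>
    obtain ⟨x, y, hax, hxy, hyb, hs⟩ := ih
    have hi := h x y i hax hxy hyb
    simp only [DenseBetween, not_forall, not_exists, not_and] at hi
    obtain ⟨x', y', hxx', hxy', hyy', hi⟩ := hi
    refine ⟨x', y', hax.trans hxx', hxy', hyy'.trans hyb, fun q hq => ?_⟩
    rw [Finset.mem_insert, not_or]
    exact ⟨hi q hq, hs q ⟨hxx'.trans_lt hq.1, hq.2.trans_le hyy'⟩⟩

theorem exists_denseBetween_color [DenselyOrdered α] [Finite ι] (c : α → ι) (hab : a < b) :
    ∃ a' b' i, a ≤ a' ∧ a' < b' ∧ b' ≤ b ∧ DenseBetween (c ⁻¹' {i}) a' b' := by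
  have := Fintype.ofFinite ι
  by_contra! h
  obtain ⟨x, y, -, hxy, -, hq⟩ :=
    exists_Ioo_forall_color_notMem_of_not_denseBetween hab h Finset.univ
  obtain ⟨q, hq'⟩ := exists_between hxy
  exact hq q hq' (Finset.mem_univ _)

end

theorem dense_color_subinterval_general (k : ℕ) (c : ℚ → Fin k)
    (a b : ℚ) (hab : a < b) :
    ∃ a' b' : ℚ, a ≤ a' ∧ a' < b' ∧ b' ≤ b ∧
      ∃ i : Fin k, ∀ x y : ℚ, a' ≤ x → x < y → y ≤ b' →
        ∃ q : ℚ, x < q ∧ q < y ∧ a' < q ∧ q < b' ∧ c q = i := by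
  obtain ⟨a', b', i, ha', hab', hb', hdense⟩ := exists_denseBetween_color c hab
  refine ⟨a', b', ha', hab', hb', i, fun x y hx hxy hy => ?_⟩
  obtain ⟨q, ⟨hxq, hqy⟩, hq⟩ := hdense x y hx hxy hy
  exact ⟨q, hxq, hqy, hx.trans_lt hxq, hqy.trans_le hy, hq⟩

/-- For every k ≥ 1, every coloring of ℚ with k colors, and all rationals a < b,
there is a subinterval (a',b') of (a,b) and a color i such that the set of
points of color i in (a',b') is dense in (a',b'). -/
theorem dense_color_subinterval (k : ℕ) (hk : 1 ≤ k) (c : ℚ → Fin k)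
    (a b : ℚ) (hab : a < b) :
    ∃ a' b' : ℚ, a ≤ a' ∧ a' < b' ∧ b' ≤ b ∧
      ∃ i : Fin k, ∀ x y : ℚ, a' ≤ x → x < y → y ≤ b' →
        ∃ q : ℚ, x < q ∧ q < y ∧ a' < q ∧ q < b' ∧ c q = i :=
  dense_color_subinterval_general k c a b hab
end

section
/- Define e : ℕ → ℕ by e(1) = 3 and e(n+1) = 2·n·e(n) + 2 for n ≥ 1. Then for every k ≥ 1 and every family of finite sets S₀, …, S_{k-1} ⊆ ℚ each having at least e(k) elements, there exist rationals a_i < b_i with a_i, b_i ∈ S_i for each i < k such that the open intervals (a₀,b₀), …, (a_{k-1},b_{k-1}) are pairwise disjoint. -/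
/-!
Induction on the number of sets. Sort the last set and pair off consecutive elements: this gives
`n + 1` intervals `(A j, B j)` with endpoints in it, lying one after another. Each of the other `n`
sets has at least `2m` elements (`m` the threshold for `n` sets), so for two intervals `j < j'` it
has `m` elements `≤ A j'` or `m` elements `≥ B j`; hence at most one interval fails to have `m` of
its elements on one side. By pigeonhole some interval `(A j, B j)` works for all `n` sets at once;
shrinking each of them to `m` elements on one side of it and applying the induction hypothesis gives
intervals disjoint from `(A j, B j)` and from each other.
-/

open Set Function

section LinearOrder

variable {α : Type*} [LinearOrder α]

lemma Set.Ioo_disjoint_Ioo_of_le {a₁ b₁ a₂ b₂ : α} (h : b₁ ≤ a₂) :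
    Disjoint (Ioo a₁ b₁) (Ioo a₂ b₂) :=
  (Iio_disjoint_Ici h).mono Ioo_subset_Iio_self (Ioo_subset_Ioi_self.trans Ioi_subset_Ici_self)

lemma Finset.exists_separated_pairs (s : Finset α) {k : ℕ} (hs : 2 * k ≤ s.card) :
    ∃ a b : Fin k → α, (∀ j, a j ∈ s ∧ b j ∈ s ∧ a j < b j) ∧ ∀ j j', j < j' → b j < a j' := by
  set f := s.orderEmbOfFin rfl
  refine ⟨fun j => f ⟨2 * j, by omega⟩, fun j => f ⟨2 * j + 1, by omega⟩,
    fun j => ⟨s.orderEmbOfFin_mem rfl _, s.orderEmbOfFin_mem rfl _, f.strictMono ?_⟩,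
    fun j j' h => f.strictMono ?_⟩
  · simp [Fin.lt_def]
  · simp only [Fin.lt_def] at h ⊢
    omega

lemma Finset.card_le_card_filter_le_add_card_filter_ge (s : Finset α) {a b : α} (h : b ≤ a) :
    s.card ≤ (s.filter (· ≤ a)).card + (s.filter (b ≤ ·)).card := by
  rw [← s.card_filter_add_card_filter_not (· ≤ a)]
  gcongr with x _
  exact fun hx => h.trans (not_le.mp hx).le

/-- `s` has at least `m` elements lying weakly on one side of the interval `(a, b)`. -/
def Finset.HasLargeOneSidedSubset (s : Finset α) (m : ℕ) (a b : α) : Prop :=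
  ∃ t ⊆ s, m ≤ t.card ∧ ∀ x ∈ t, ∀ y ∈ t, Disjoint (Set.Ioo x y) (Set.Ioo a b)

lemma Finset.hasLargeOneSidedSubset_or (s : Finset α) {m : ℕ} (hs : 2 * m ≤ s.card)
    {a b a' b' : α} (h : b ≤ a') :
    s.HasLargeOneSidedSubset m a' b' ∨ s.HasLargeOneSidedSubset m a b := by
  have := s.card_le_card_filter_le_add_card_filter_ge h
  by_cases hle : m ≤ (s.filter (· ≤ a')).card
  · refine .inl ⟨s.filter (· ≤ a'), s.filter_subset _, hle, fun x _ y hy => ?_⟩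
    exact Ioo_disjoint_Ioo_of_le (Finset.mem_filter.mp hy).2
  · refine .inr ⟨s.filter (b ≤ ·), s.filter_subset _, by omega, fun x hx y _ => ?_⟩
    exact (Ioo_disjoint_Ioo_of_le (Finset.mem_filter.mp hx).2).symm

lemma Fin.pairwise_disjoint_Ioo_snoc {n : ℕ} {a b : Fin n → α} {c d : α}
    (h : Pairwise (Disjoint on fun i => Ioo (a i) (b i)))
    (hcd : ∀ i, Disjoint (Ioo (a i) (b i)) (Ioo c d)) :
    Pairwise (Disjoint on fun i =>
      Ioo (Fin.snoc (α := fun _ => α) a c i) (Fin.snoc (α := fun _ => α) b d i)) := by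
  intro i j hij
  induction i using Fin.lastCases <;> induction j using Fin.lastCases
  · exact absurd rfl hij
  · simpa [onFun] using (hcd _).symm
  · simpa [onFun] using hcd _
  · simpa [onFun] using h (ne_of_apply_ne _ hij)

end LinearOrder

lemma Fintype.exists_forall_of_card_lt {ι κ : Type*} [Fintype ι] [Fintype κ]
    {good : ι → κ → Prop} (hgood : ∀ i j j', j ≠ j' → good i j ∨ good i j')
    (h : Fintype.card ι < Fintype.card κ) : ∃ j, ∀ i, good i j := by
  by_contra! hbad
  choose f hf using hbad
  obtain ⟨j, j', hne, heq⟩ := Fintype.exists_ne_map_eq_of_card_lt f h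
  rcases hgood (f j) j j' hne with hj | hj'
  exacts [hf j hj, hf j' (heq ▸ hj')]

def HasDisjointIooSelection (α : Type*) [LinearOrder α] (k m : ℕ) : Prop :=
  ∀ S : Fin k → Finset α, (∀ i, m ≤ (S i).card) → ∃ a b : Fin k → α,
    (∀ i, a i ∈ S i ∧ b i ∈ S i ∧ a i < b i) ∧ Pairwise (Disjoint on fun i => Ioo (a i) (b i))

namespace HasDisjointIooSelection

variable {α : Type*} [LinearOrder α]

lemma zero (m : ℕ) : HasDisjointIooSelection α 0 m :=
  fun _ _ => ⟨Fin.elim0, Fin.elim0, fun i => i.elim0, fun i => i.elim0⟩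

lemma mono {k m m' : ℕ} (h : HasDisjointIooSelection α k m) (hm : m ≤ m') :
    HasDisjointIooSelection α k m' :=
  fun S hS => h S fun i => hm.trans (hS i)

lemma succ {n m : ℕ} (h : HasDisjointIooSelection α n m) (hm : 1 ≤ m) :
    HasDisjointIooSelection α (n + 1) (2 * n * m + 2) := by
  intro S hS
  obtain ⟨A, B, hAB, hBA⟩ :=
    (S (Fin.last n)).exists_separated_pairs (k := n + 1) (by nlinarith [hS (Fin.last n)])
  have hlarge (i : Fin n) : 2 * m ≤ (S i.castSucc).card := by
    nlinarith [hS i.castSucc, i.pos]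
  obtain ⟨j, hj⟩ := Fintype.exists_forall_of_card_lt
    (good := fun (i : Fin n) (j : Fin (n + 1)) =>
      (S i.castSucc).HasLargeOneSidedSubset m (A j) (B j))
    (fun i j j' hne => by
      rcases hne.lt_or_gt with hlt | hlt
      · exact ((S i.castSucc).hasLargeOneSidedSubset_or (hlarge i) (hBA j j' hlt).le).symm
      · exact (S i.castSucc).hasLargeOneSidedSubset_or (hlarge i) (hBA j' j hlt).le)
    (by simp)
  choose T hTS hTcard hTside using hj
  obtain ⟨a, b, hab, hdisj⟩ := h T hTcard
  refine ⟨Fin.snoc a (A j), Fin.snoc b (B j), fun i => ?_,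
    Fin.pairwise_disjoint_Ioo_snoc hdisj fun i => hTside i _ (hab i).1 _ (hab i).2.1⟩
  induction i using Fin.lastCases with
  | last => simpa using hAB j
  | cast i => simpa using ⟨hTS i (hab i).1, hTS i (hab i).2.1, (hab i).2.2⟩

end HasDisjointIooSelection

/-- If e satisfies e(1) = 3 and e(n+1) = 2n·e(n) + 2 for n ≥ 1, then from any
k finite sets of rationals each of size at least e(k) one can pick endpoints
a_i < b_i in the i-th set so that the open intervals (a_i, b_i) are pairwise
disjoint. -/
theorem disjoint_intervals_from_large_sets (e : ℕ → ℕ)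
    (he1 : e 1 = 3) (herec : ∀ n : ℕ, 1 ≤ n → e (n + 1) = 2 * n * e n + 2)
    (k : ℕ) (hk : 1 ≤ k) (S : Fin k → Finset ℚ)
    (hcard : ∀ i : Fin k, e k ≤ (S i).card) :
    ∃ a b : Fin k → ℚ,
      (∀ i : Fin k, a i ∈ S i ∧ b i ∈ S i ∧ a i < b i) ∧
      ∀ i j : Fin k, i ≠ j → Disjoint (Set.Ioo (a i) (b i)) (Set.Ioo (a j) (b j)) := by
  have key (n : ℕ) (hn : 1 ≤ n) : 1 ≤ e n ∧ HasDisjointIooSelection ℚ n (e n) := by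
    induction n, hn using Nat.le_induction with
    | base => exact ⟨by omega, ((HasDisjointIooSelection.zero 1).succ le_rfl).mono (by omega)⟩
    | succ n hn ih => rw [herec n hn]; exact ⟨by omega, ih.2.succ ih.1⟩
  exact (key k hk).2 S hcard
end
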